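/- arXiv:2005.13097 — 5 statements merged into one kernel-verified Lean document; each statement's English description precedes it below -/
import Mathlib

section
/- For 1 < α < 2, the function f : ℝ^d → ℝ^d defined by f(x) = ‖x‖^{α-2}·x (with f(0)=0) is (α-1)-Hölder continuous with constant 5: ‖f(x)-f(y)‖ ≤ 5·‖x-y‖^{α-1} for all x, y. -/
/-!
Write `f x = ‖x‖ ^ (p - 1) • x` with `p = α - 1 ∈ (0, 1]`, so that `‖f x‖ = ‖x‖ ^ p`, and assume
`‖y‖ ≤ ‖x‖`. If `‖y‖ ≤ ‖x - y‖`, both `‖x‖` and `‖y‖` are at most `2 ‖x - y‖` and the triangle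
inequality suffices. Otherwise split
`f x - f y = ‖x‖ ^ (p - 1) • (x - y) - (‖y‖ ^ (p - 1) - ‖x‖ ^ (p - 1)) • y`;
since `u ↦ u ^ (p - 1)` is antitone and `‖x‖ ≤ ‖y‖ + ‖x - y‖`, each term is at most
`‖x - y‖ ^ p`. This gives the constant 3.
-/

open Real

lemma Real.rpow_sub_one_mul_self {s p : ℝ} (hs : 0 ≤ s) (hp : p ≠ 0) : s ^ (p - 1) * s = s ^ p := by
  rw [← rpow_add_one' hs (by rwa [sub_add_cancel]), sub_add_cancel]

lemma Real.rpow_sub_one_mul_le_rpow {r t p : ℝ} (hp0 : 0 < p) (hp1 : p ≤ 1) (ht : 0 ≤ t)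
    (htr : t ≤ r) : r ^ (p - 1) * t ≤ t ^ p := by
  rcases ht.eq_or_lt with rfl | ht
  · simp [zero_rpow hp0.ne']
  calc r ^ (p - 1) * t ≤ t ^ (p - 1) * t :=
        mul_le_mul_of_nonneg_right (rpow_le_rpow_of_nonpos ht htr (sub_nonpos.mpr hp1)) ht.le
    _ = t ^ p := rpow_sub_one_mul_self ht.le hp0.ne'

section

variable {E : Type*} [SeminormedAddCommGroup E] [NormedSpace ℝ E] {p : ℝ}

lemma norm_rpow_sub_one_smul_self (hp : p ≠ 0) (x : E) : ‖‖x‖ ^ (p - 1) • x‖ = ‖x‖ ^ p := by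
  rw [norm_smul, Real.norm_of_nonneg (rpow_nonneg (norm_nonneg x) _),
    rpow_sub_one_mul_self (norm_nonneg x) hp]

lemma norm_rpow_sub_one_smul_sub_le_of_norm_le (hp0 : 0 < p) (hp1 : p ≤ 1) {x y : E}
    (hy : ‖y‖ ≤ ‖x - y‖) :
    ‖‖x‖ ^ (p - 1) • x - ‖y‖ ^ (p - 1) • y‖ ≤ 3 * ‖x - y‖ ^ p := by
  have hx : ‖x‖ ≤ 2 * ‖x - y‖ := by linarith [norm_le_insert' x y]
  have hxp : ‖x‖ ^ p ≤ 2 * ‖x - y‖ ^ p :=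
    calc ‖x‖ ^ p ≤ (2 * ‖x - y‖) ^ p := rpow_le_rpow (norm_nonneg _) hx hp0.le
      _ = 2 ^ p * ‖x - y‖ ^ p := mul_rpow zero_le_two (norm_nonneg _)
      _ ≤ 2 * ‖x - y‖ ^ p := by gcongr; exact rpow_le_self_of_one_le one_le_two hp1
  have hyp : ‖y‖ ^ p ≤ ‖x - y‖ ^ p := rpow_le_rpow (norm_nonneg _) hy hp0.le
  calc _ ≤ ‖x‖ ^ p + ‖y‖ ^ p := by
        simpa only [norm_rpow_sub_one_smul_self hp0.ne'] using
          norm_sub_le (‖x‖ ^ (p - 1) • x) (‖y‖ ^ (p - 1) • y)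
    _ ≤ 3 * ‖x - y‖ ^ p := by linarith

lemma norm_rpow_sub_one_smul_sub_le_of_lt_norm (hp0 : 0 < p) (hp1 : p ≤ 1) {x y : E}
    (hyx : ‖y‖ ≤ ‖x‖) (hy : ‖x - y‖ < ‖y‖) :
    ‖‖x‖ ^ (p - 1) • x - ‖y‖ ^ (p - 1) • y‖ ≤ 2 * ‖x - y‖ ^ p := by
  set r := ‖x‖
  set s := ‖y‖
  set t := ‖x - y‖
  have hs : 0 < s := (norm_nonneg _).trans_lt hy
  have hr : r ≤ s + t := by linarith [norm_le_insert' x y]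
  have hab : r ^ (p - 1) ≤ s ^ (p - 1) := rpow_le_rpow_of_nonpos hs hyx (sub_nonpos.mpr hp1)
  have hat : r ^ (p - 1) * t ≤ t ^ p :=
    rpow_sub_one_mul_le_rpow hp0 hp1 (norm_nonneg _) (by linarith)
  have hbs : s ^ (p - 1) * s ≤ r ^ (p - 1) * (s + t) :=
    calc s ^ (p - 1) * s = s ^ p := rpow_sub_one_mul_self hs.le hp0.ne'
      _ ≤ (s + t) ^ p := rpow_le_rpow hs.le (by linarith [norm_nonneg (x - y)]) hp0.le
      _ = (s + t) ^ (p - 1) * (s + t) := (rpow_sub_one_mul_self (by linarith) hp0.ne').symm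
      _ ≤ r ^ (p - 1) * (s + t) :=
        mul_le_mul_of_nonneg_right
          (rpow_le_rpow_of_nonpos (hs.trans_le hyx) hr (sub_nonpos.mpr hp1)) (by positivity)
  have hsplit : r ^ (p - 1) • x - s ^ (p - 1) • y =
      r ^ (p - 1) • (x - y) - (s ^ (p - 1) - r ^ (p - 1)) • y := by
    rw [smul_sub, sub_smul]; abel
  calc ‖r ^ (p - 1) • x - s ^ (p - 1) • y‖
      ≤ ‖r ^ (p - 1) • (x - y)‖ + ‖(s ^ (p - 1) - r ^ (p - 1)) • y‖ :=
        hsplit ▸ norm_sub_le _ _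
    _ = r ^ (p - 1) * t + (s ^ (p - 1) - r ^ (p - 1)) * s := by
      rw [norm_smul, norm_smul, Real.norm_of_nonneg (rpow_nonneg (norm_nonneg x) _),
        Real.norm_of_nonneg (sub_nonneg.mpr hab)]
    _ ≤ 2 * t ^ p := by linarith

theorem norm_rpow_sub_one_smul_sub_le (hp0 : 0 < p) (hp1 : p ≤ 1) (x y : E) :
    ‖‖x‖ ^ (p - 1) • x - ‖y‖ ^ (p - 1) • y‖ ≤ 3 * ‖x - y‖ ^ p := by
  wlog hyx : ‖y‖ ≤ ‖x‖ generalizing x y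
  · rw [norm_sub_rev, norm_sub_rev x]
    exact this y x (le_of_not_ge hyx)
  rcases le_or_gt ‖y‖ ‖x - y‖ with hy | hy
  · exact norm_rpow_sub_one_smul_sub_le_of_norm_le hp0 hp1 hy
  · linarith [norm_rpow_sub_one_smul_sub_le_of_lt_norm hp0 hp1 hyx hy,
      rpow_nonneg (norm_nonneg (x - y)) p]

end

theorem holder_norm_rpow_smul {d : ℕ} (α : ℝ) (hα1 : 1 < α) (hα2 : α < 2) :
    ∀ x y : EuclideanSpace ℝ (Fin d),
      ‖(‖x‖ ^ (α - 2)) • x - (‖y‖ ^ (α - 2)) • y‖ ≤ 5 * ‖x - y‖ ^ (α - 1) := by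
  intro x y
  have h := norm_rpow_sub_one_smul_sub_le (p := α - 1) (by linarith) (by linarith) x y
  rw [sub_sub, one_add_one_eq_two] at h
  linarith [rpow_nonneg (norm_nonneg (x - y)) (α - 1)]
end

section
/- Let f : ℝ^d → ℝ be a differentiable convex function with ∫ e^{-f(x)} dx = 1. Then there exist constants a, b > 0 such that f(x) ≥ a·‖x‖ - b for all x ∈ ℝ^d. -/
open MeasureTheory ENNReal

theorem convex_potential_linear_growth {d : ℕ}
    (f : EuclideanSpace ℝ (Fin d) → ℝ)
    (hconv : ConvexOn ℝ Set.univ f)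
    (hdiff : Differentiable ℝ f)
    (hnorm : ∫ x, Real.exp (-f x) = 1) :
    ∃ a b : ℝ, 0 < a ∧ 0 < b ∧ ∀ x, a * ‖x‖ - b ≤ f x := by
  have hcont : Continuous f := hdiff.continuous
  have hint : Integrable (fun x => Real.exp (-f x)) := by
    by_contra h
    rw [integral_undef h] at hnorm
    exact one_ne_zero hnorm.symm
  set S : Set (EuclideanSpace ℝ (Fin d)) := {x | f x ≤ f 0 + 1} with hSdef
  have hS0 : (0 : EuclideanSpace ℝ (Fin d)) ∈ S := by simp [hSdef]
  have hSconv : Convex ℝ S := by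
    have := hconv.convex_le (f 0 + 1)
    simpa [hSdef] using this
  obtain ⟨r, hr, hball⟩ : ∃ r > 0, Metric.ball (0 : EuclideanSpace ℝ (Fin d)) r ⊆ S := by
    rcases Metric.continuousAt_iff.mp (hcont.continuousAt (x := 0)) 1 one_pos with ⟨δ, hδ, h⟩
    refine ⟨δ, hδ, fun x hx => ?_⟩
    have h2 := h (Metric.mem_ball.mp hx)
    rw [Real.dist_eq, abs_lt] at h2
    simp only [hSdef, Set.mem_setOf_eq]
    linarith [h2.1]
  have hSfin : volume S < ∞ := by
    refine lt_of_le_of_lt (measure_mono ?_)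
      (hint.measure_ge_lt_top (ε := Real.exp (-(f 0 + 1))) (Real.exp_pos _))
    intro x hx
    simp only [hSdef, Set.mem_setOf_eq] at *
    exact Real.exp_le_exp.2 (by linarith)
  have hbdd : ∃ R > 0, ∀ x ∈ S, ‖x‖ < R := by
    by_contra h
    push_neg at h
    have H : ∀ n : ℕ, ∃ x ∈ S, 4 * r * (n + 1) ≤ ‖x‖ := by
      intro n
      obtain ⟨x, hxS, hx⟩ := h (4 * r * (n + 1)) (by positivity)
      exact ⟨x, hxS, hx⟩
    choose x hxS hxn using H
    have hxpos : ∀ n, 0 < ‖x n‖ := fun n =>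
      lt_of_lt_of_le (by positivity) (hxn n)
    set c : ℕ → EuclideanSpace ℝ (Fin d) := fun n => (2 * r * (n + 1) / ‖x n‖) • x n with hc
    have hcnorm : ∀ n, ‖c n‖ = 2 * r * (n + 1) := by
      intro n
      rw [hc]
      rw [norm_smul, Real.norm_eq_abs, abs_of_nonneg (by positivity),
        div_mul_cancel₀ _ (hxpos n).ne']
    have hcS : ∀ n, (2 : ℝ) • c n ∈ S := by
      intro n
      have ht0 : (0:ℝ) ≤ 4 * r * (n + 1) / ‖x n‖ := by positivity
      have ht1 : 4 * r * (n + 1) / ‖x n‖ ≤ 1 :=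
        div_le_one_of_le₀ (hxn n) (norm_nonneg _)
      have key : (2:ℝ) • c n = (4 * r * (n+1) / ‖x n‖) • x n := by
        rw [hc]
        rw [smul_smul]
        congr 1
        ring
      set t : ℝ := 4 * r * (n + 1) / ‖x n‖ with htd
      have hmem := hSconv (hxS n) hS0 (show (0:ℝ) ≤ t from ht0)
        (show (0:ℝ) ≤ 1 - t by linarith) (show t + (1 - t) = 1 by ring)
      rw [smul_zero, add_zero] at hmem
      rw [key]
      exact hmem
    have hballS : ∀ n, Metric.ball (c n) (r / 2) ⊆ S := by
      intro n z hz
      have hz' : ‖(2:ℝ) • z - (2:ℝ) • c n‖ < r := by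
        rw [← smul_sub, norm_smul]
        simp only [Real.norm_ofNat]
        have : ‖z - c n‖ < r / 2 := by
          simpa [dist_eq_norm] using Metric.mem_ball.mp hz
        linarith
      have hmem : (2:ℝ) • z - (2:ℝ) • c n ∈ S := hball (by
        simpa [Metric.mem_ball, dist_eq_norm] using hz')
      have := hSconv (hcS n) hmem (by norm_num : (0:ℝ) ≤ 1/2) (by norm_num : (0:ℝ) ≤ 1/2)
        (by norm_num)
      have heq : (1/2 : ℝ) • ((2:ℝ) • c n) + (1/2 : ℝ) • ((2:ℝ) • z - (2:ℝ) • c n) = z := by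
        rw [smul_sub, smul_smul, smul_smul]
        norm_num
        module
      rwa [heq] at this
    have hdisj : Pairwise (Function.onFun Disjoint fun n => Metric.ball (c n) (r / 2)) := by
      intro m n hmn
      apply Metric.ball_disjoint_ball
      have : |(2 * r * (m + 1)) - (2 * r * (n + 1))| ≤ dist (c m) (c n) := by
        rw [← hcnorm m, ← hcnorm n]
        exact abs_norm_sub_norm_le _ _
      have hmn' : (1:ℝ) ≤ |(m:ℝ) - n| := by
        have : (m:ℝ) ≠ n := by exact_mod_cast fun h => hmn (Nat.cast_injective h)
        rcases lt_or_gt_of_ne this with h' | h'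
        · rw [abs_sub_comm]
          rw [abs_of_pos (by linarith)]
          have : (m:ℕ) < n := by exact_mod_cast h'
          have : (m:ℝ) + 1 ≤ n := by exact_mod_cast this
          linarith
        · rw [abs_of_pos (by linarith)]
          have : (n:ℕ) < m := by exact_mod_cast h'
          have : (n:ℝ) + 1 ≤ m := by exact_mod_cast this
          linarith
      have habs : |(2 * r * ((m:ℝ) + 1)) - (2 * r * (n + 1))| = 2 * r * |(m:ℝ) - n| := by
        rw [show (2*r*((m:ℝ)+1) - 2*r*(n+1)) = 2*r*((m:ℝ)-n) by ring, abs_mul,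
          abs_of_nonneg (by positivity : (0:ℝ) ≤ 2*r)]
      rw [habs] at this
      nlinarith [hr]
    have hsum : volume (⋃ n, Metric.ball (c n) (r / 2)) = ∞ := by
      rw [measure_iUnion hdisj (fun n => measurableSet_ball)]
      have : ∀ n, volume (Metric.ball (c n) (r / 2)) = volume (Metric.ball (0 : EuclideanSpace ℝ (Fin d)) (r / 2)) := by
        intro n
        exact Measure.addHaar_ball_center volume (c n) (r / 2)
      simp_rw [this]
      exact ENNReal.tsum_const_eq_top_of_ne_zero
        (ne_of_gt (Metric.measure_ball_pos volume 0 (by positivity)))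
    have : volume S = ∞ := by
      have := measure_mono (μ := volume) (Set.iUnion_subset hballS : (⋃ n, Metric.ball (c n) (r/2)) ⊆ S)
      rw [hsum] at this
      exact top_le_iff.mp this
    rw [this] at hSfin
    exact lt_irrefl _ hSfin
  obtain ⟨R, hRpos, hR⟩ := hbdd
  -- linear growth outside ball R
  have hgrow : ∀ x : EuclideanSpace ℝ (Fin d), R ≤ ‖x‖ → (1/R) * ‖x‖ + f 0 ≤ f x := by
    intro x hx
    have hxpos : 0 < ‖x‖ := lt_of_lt_of_le hRpos hx
    set t : ℝ := R / ‖x‖ with htdef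
    have ht0 : 0 < t := by positivity
    have ht1 : t ≤ 1 := div_le_one_of_le₀ hx (norm_nonneg _)
    have hy : ‖t • x‖ = R := by
      rw [norm_smul, Real.norm_eq_abs, abs_of_pos ht0, htdef,
        div_mul_cancel₀ _ hxpos.ne']
    have hynS : t • x ∉ S := fun hmem => absurd (hR _ hmem) (by rw [hy]; exact lt_irrefl R)
    have hfy : f 0 + 1 < f (t • x) := lt_of_not_ge (fun hle => hynS hle)
    have hcv := hconv.2 (Set.mem_univ x) (Set.mem_univ 0) ht0.le
      (by linarith : (0:ℝ) ≤ 1 - t) (by ring)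
    rw [smul_zero, add_zero] at hcv
    -- f (t • x) ≤ t * f x + (1 - t) * f 0
    have h1 : f 0 + 1 < t * f x + (1 - t) * f 0 := lt_of_lt_of_le hfy hcv
    have h2 : 1 < t * (f x - f 0) := by nlinarith
    have h3 : 1 / t ≤ f x - f 0 := by
      rw [div_le_iff₀ ht0]
      nlinarith
    have h4 : (1/R) * ‖x‖ = 1 / t := by
      rw [htdef]
      field_simp
    linarith [h4 ▸ h3]
  -- min on closed ball
  obtain ⟨x₀, _, hmin⟩ := (isCompact_closedBall (0 : EuclideanSpace ℝ (Fin d)) R).exists_isMinOn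
    ⟨0, Metric.mem_closedBall_self hRpos.le⟩ hcont.continuousOn
  set m : ℝ := f x₀ with hm
  refine ⟨1/R, max 1 (max (-f 0) (1 - m)), by positivity, lt_of_lt_of_le one_pos (le_max_left _ _), ?_⟩
  intro x
  set b : ℝ := max 1 (max (-f 0) (1 - m)) with hb
  have hb1 : -f 0 ≤ b := le_trans (le_max_left _ _) (le_max_right _ _)
  have hb2 : 1 - m ≤ b := le_trans (le_max_right _ _) (le_max_right _ _)
  rcases le_or_gt R ‖x‖ with hx | hx
  · have := hgrow x hx
    linarith
  · have hxball : x ∈ Metric.closedBall (0 : EuclideanSpace ℝ (Fin d)) R := by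
      simpa [Metric.mem_closedBall, dist_eq_norm] using hx.le
    have hmx : m ≤ f x := hmin hxball
    have : (1/R) * ‖x‖ ≤ (1/R) * R := by
      apply mul_le_mul_of_nonneg_left hx.le (by positivity)
    rw [one_div_mul_cancel hRpos.ne'] at this
    linarith
end

section
/- Suppose f : ℝ^d → ℝ is differentiable and satisfies ⟨∇f(x), x⟩ ≥ a‖x‖^α - b for all x (with a, b > 0, α ∈ [1,2]) and ‖∇f(x)‖ ≤ M(1+‖x‖^ζ) for all x with 0 < ζ ≤ α/2. Then f(x) ≥ (a/(2α))·‖x‖^α + f(0) - M·((2a+2b)/a)² - b for all x. -/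
/-!
Put `s = (2b/a)^{1/α}`. Outside the ball of radius `s` the dissipativity condition gives
`⟪∇f y, y⟫ ≥ (a/2)‖y‖^α`, so along the ray through `x` the function `f` gains at least
`(a/(2α))(‖x‖^α - s^α)` past the sphere of radius `s`. Inside that ball the gradient is bounded
by `M(1 + s^ζ)`, so by the mean value theorem `f` loses at most `M(1 + s^ζ)s` relative to `f 0`.
Finally `u^p ≤ 1 + u` for `p ∈ [0, 1]` bounds `(1 + s^ζ)s` by `(2 + 2b/a)^2`.
-/

open Real InnerProductSpace

theorem Real.rpow_le_one_add_self {u p : ℝ} (hu : 0 ≤ u) (hp0 : 0 ≤ p) (hp1 : p ≤ 1) :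
    u ^ p ≤ 1 + u := by
  have h := rpow_one_add_le_one_add_mul_self (s := u - 1) (by linarith) hp0 hp1
  rw [add_sub_cancel] at h
  nlinarith

theorem Real.one_add_rpow_mul_rpow_le_two_add_sq {u p q : ℝ} (hu : 0 ≤ u) (hp0 : 0 ≤ p)
    (hp1 : p ≤ 1) (hq0 : 0 ≤ q) (hq1 : q ≤ 1) : (1 + u ^ q) * u ^ p ≤ (2 + u) ^ 2 := by
  have hp := rpow_le_one_add_self hu hp0 hp1
  have hq := rpow_le_one_add_self hu hq0 hq1
  have hp' : 0 ≤ u ^ p := rpow_nonneg hu p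
  have hq' : 0 ≤ u ^ q := rpow_nonneg hu q
  calc (1 + u ^ q) * u ^ p ≤ (2 + u) * (1 + u) :=
        mul_le_mul (by linarith) hp hp' (by positivity)
    _ ≤ (2 + u) ^ 2 := by nlinarith

section Gradient

variable {E : Type*} [NormedAddCommGroup E] [InnerProductSpace ℝ E] [CompleteSpace E]
  {f : E → ℝ} {f' : E → E}

theorem HasGradientAt.hasDerivAt_comp_smul_const {x g : E} {t : ℝ}
    (hf : HasGradientAt f g (t • x)) : HasDerivAt (fun t : ℝ => f (t • x)) ⟪g, x⟫_ℝ t := by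
  have h := hf.hasFDerivAt.comp_hasDerivAt t ((hasDerivAt_id t).smul_const x)
  rwa [one_smul, toDual_apply_apply] at h

theorem sub_le_of_norm_gradient_le_on_closedBall {L ρ : ℝ}
    (hf : ∀ y, HasGradientAt f (f' y) y) (hL : ∀ y, ‖y‖ ≤ ρ → ‖f' y‖ ≤ L)
    {x : E} (hx : ‖x‖ ≤ ρ) : f 0 - L * ‖x‖ ≤ f x := by
  have h := (convex_closedBall (0 : E) ρ).norm_image_sub_le_of_norm_hasFDerivWithin_le
    (f := f) (f' := fun y => toDual ℝ E (f' y))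
    (fun y _ => (hf y).hasFDerivAt.hasFDerivWithinAt)
    (fun y hy => by simpa using hL y (by simpa using hy))
    (Metric.mem_closedBall_self ((norm_nonneg x).trans hx)) (by simpa using hx)
  rw [sub_zero, Real.norm_eq_abs] at h
  linarith [neg_abs_le (f x - f 0)]

theorem add_rpow_sub_le_of_inner_gradient_ge {c α t₀ : ℝ} {x : E} (hα : α ≠ 0) (ht₀ : 0 < t₀)
    (ht₀1 : t₀ ≤ 1) (hf : ∀ t ∈ Set.Icc t₀ 1, HasGradientAt f (f' (t • x)) (t • x))
    (hcoer : ∀ t ∈ Set.Icc t₀ 1, c * ‖t • x‖ ^ α ≤ ⟪f' (t • x), t • x⟫_ℝ) :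
    f (t₀ • x) + c / α * (‖x‖ ^ α - ‖t₀ • x‖ ^ α) ≤ f x := by
  set g : ℝ → ℝ := fun t => f (t • x) - c / α * ‖x‖ ^ α * t ^ α
  have hg : ∀ t ∈ Set.Icc t₀ 1,
      HasDerivAt g (⟪f' (t • x), x⟫_ℝ - c / α * ‖x‖ ^ α * (α * t ^ (α - 1))) t := fun t ht =>
    (hf t ht).hasDerivAt_comp_smul_const.sub
      ((hasDerivAt_rpow_const (Or.inl (ht₀.trans_le ht.1).ne')).const_mul _)
  have hmono : MonotoneOn g (Set.Icc t₀ 1) := by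
    refine monotoneOn_of_hasDerivWithinAt_nonneg (convex_Icc t₀ 1)
      (fun t ht => (hg t ht).continuousAt.continuousWithinAt)
      (fun t ht => (hg t (interior_subset ht)).hasDerivWithinAt) fun t ht => ?_
    rw [interior_Icc] at ht
    have ht0 : 0 < t := ht₀.trans ht.1
    have h := hcoer t (Set.Ioo_subset_Icc_self ht)
    rw [norm_smul, Real.norm_of_nonneg ht0.le, mul_rpow ht0.le (norm_nonneg x),
      real_inner_smul_right] at h
    rw [rpow_sub_one ht0.ne', ← mul_nonneg_iff_of_pos_left ht0]
    field_simp
    linarith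
  have h := hmono (Set.left_mem_Icc.2 ht₀1) (Set.right_mem_Icc.2 ht₀1) ht₀1
  simp only [g, one_smul, one_rpow, mul_one] at h
  rw [norm_smul, Real.norm_of_nonneg ht₀.le, mul_rpow ht₀.le (norm_nonneg x)]
  linarith

theorem lower_bound_of_norm_gradient_le_of_radial_coercive {c α L s : ℝ} (hα : 0 < α)
    (hc : 0 ≤ c) (hs : 0 < s) (hf : ∀ y, HasGradientAt f (f' y) y)
    (hL : ∀ y, ‖y‖ ≤ s → ‖f' y‖ ≤ L) (hcoer : ∀ y, s ≤ ‖y‖ → c * ‖y‖ ^ α ≤ ⟪f' y, y⟫_ℝ)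
    (x : E) : f 0 - L * s + c / α * (‖x‖ ^ α - s ^ α) ≤ f x := by
  rcases le_or_gt ‖x‖ s with hxs | hxs
  · have hL0 : 0 ≤ L := (norm_nonneg _).trans (hL 0 (by simpa using hs.le))
    have hpow : ‖x‖ ^ α ≤ s ^ α := rpow_le_rpow (norm_nonneg x) hxs hα.le
    have hcα : 0 ≤ c / α := div_nonneg hc hα.le
    nlinarith [sub_le_of_norm_gradient_le_on_closedBall hf hL hxs,
      mul_le_mul_of_nonneg_left hxs hL0]
  · have hx0 : 0 < ‖x‖ := hs.trans hxs
    set t₀ := s / ‖x‖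
    have hnorm : ∀ t : ℝ, 0 ≤ t → ‖t • x‖ = t * ‖x‖ := fun t ht => by
      rw [norm_smul, Real.norm_of_nonneg ht]
    have ht₀x : ‖t₀ • x‖ = s := by
      rw [hnorm t₀ (by positivity), div_mul_cancel₀ s hx0.ne']
    have hray := add_rpow_sub_le_of_inner_gradient_ge (x := x) hα.ne' (by positivity)
      ((div_le_one hx0).2 hxs.le) (fun t _ => hf _) fun t ht => hcoer _ ?_
    · have hball := sub_le_of_norm_gradient_le_on_closedBall hf hL ht₀x.le
      rw [ht₀x] at hray hball
      linarith
    · rw [← ht₀x, hnorm t₀ (by positivity), hnorm t ((by positivity : 0 ≤ t₀).trans ht.1)]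
      exact mul_le_mul_of_nonneg_right ht.1 hx0.le

end Gradient

theorem potential_growth_lower_bound_general {d : ℕ}
    (f : EuclideanSpace ℝ (Fin d) → ℝ)
    (f' : EuclideanSpace ℝ (Fin d) → EuclideanSpace ℝ (Fin d))
    (a b M α ζ : ℝ) (ha : 0 < a) (hb : 0 < b) (hM : 0 < M)
    (hα1 : 1 ≤ α) (hζ0 : 0 < ζ) (hζ : ζ ≤ α / 2)
    (hgrad : ∀ x, HasGradientAt f (f' x) x)
    (hdis : ∀ x, a * ‖x‖ ^ α - b ≤ (inner ℝ (f' x) x : ℝ))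
    (hgrow : ∀ x, ‖f' x‖ ≤ M * (1 + ‖x‖ ^ ζ)) :
    ∀ x, (a / (2 * α)) * ‖x‖ ^ α + f 0 - M * ((2 * a + 2 * b) / a) ^ 2 - b ≤ f x := by
  intro x
  have hα : 0 < α := one_pos.trans_le hα1
  set u := 2 * b / a
  have hu : 0 < u := by positivity
  have hau : a * u = 2 * b := mul_div_cancel₀ _ ha.ne'
  -- `s` is the radius beyond which the dissipativity term `b` is absorbed by half of `a ‖y‖ ^ α`.
  set s := u ^ α⁻¹
  have hs : 0 < s := rpow_pos_of_pos hu _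
  have hsα : s ^ α = u := rpow_inv_rpow hu.le hα.ne'
  have hL : ∀ y, ‖y‖ ≤ s → ‖f' y‖ ≤ M * (1 + s ^ ζ) := fun y hy =>
    (hgrow y).trans (by gcongr)
  have hcoer : ∀ y, s ≤ ‖y‖ → a / 2 * ‖y‖ ^ α ≤ ⟪f' y, y⟫_ℝ := fun y hy => by
    have : a / 2 * s ^ α = b := by rw [hsα]; linear_combination hau / 2
    have : s ^ α ≤ ‖y‖ ^ α := rpow_le_rpow hs.le hy hα.le
    nlinarith [hdis y]
  have hbound := lower_bound_of_norm_gradient_le_of_radial_coercive hα (by positivity) hs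
    hgrad hL hcoer x
  have hconst : M * (1 + s ^ ζ) * s ≤ M * ((2 * a + 2 * b) / a) ^ 2 := by
    have hC : (2 * a + 2 * b) / a = 2 + u := by field_simp; linear_combination -hau
    rw [mul_assoc, hC, ← rpow_mul hu.le]
    gcongr
    exact one_add_rpow_mul_rpow_le_two_add_sq hu.le (by positivity) (inv_le_one_of_one_le₀ hα1)
      (by positivity) (by rw [inv_mul_le_iff₀ hα]; linarith)
  have hshift : a / 2 / α * (‖x‖ ^ α - s ^ α) = a / (2 * α) * ‖x‖ ^ α - b / α := by
    rw [hsα]; field_simp; linear_combination -hau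
  have hbα : b / α ≤ b := div_le_self hb.le hα1
  linarith

theorem potential_growth_lower_bound {d : ℕ}
    (f : EuclideanSpace ℝ (Fin d) → ℝ)
    (f' : EuclideanSpace ℝ (Fin d) → EuclideanSpace ℝ (Fin d))
    (a b M α ζ : ℝ) (ha : 0 < a) (hb : 0 < b) (hM : 0 < M)
    (hα1 : 1 ≤ α) (hα2 : α ≤ 2) (hζ0 : 0 < ζ) (hζ : ζ ≤ α / 2)
    (hgrad : ∀ x, HasGradientAt f (f' x) x)
    (hdis : ∀ x, a * ‖x‖ ^ α - b ≤ (inner ℝ (f' x) x : ℝ))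
    (hgrow : ∀ x, ‖f' x‖ ≤ M * (1 + ‖x‖ ^ ζ)) :
    ∀ x, (a / (2 * α)) * ‖x‖ ^ α + f 0 - M * ((2 * a + 2 * b) / a) ^ 2 - b ≤ f x :=
  potential_growth_lower_bound_general f f' a b M α ζ ha hb hM hα1 hζ0 hζ hgrad hdis hgrow
end

section
/- Suppose f : ℝ^d → ℝ is differentiable and there exists ε ≥ 0 and a function g with ‖∇f - ∇g‖_∞ ≤ ε, where g is twice differentiable and satisfies Hess g(x) ⪰ μ·(1+‖x‖/1)^{α-2}·I for some μ > 0 and α = 2-θ ∈ (1,2] (i.e. Hess g(x) ⪰ μ(1+‖x‖)^{α-2} I for all x). Then f satisfies the dissipativity condition ⟨∇f(x), x⟩ ≥ a‖x‖^α - b for all x, with a = μ/(2(α-1)) and b = (2(‖∇g(0)‖+μ+ε)^α/μ)^{1/(α-1)}. -/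
/-!
Along the ray `t ↦ t • x`, the Hessian bound makes `t ↦ ⟪∇g (t • x), x⟫` grow at least like the
antiderivative of `μ ‖x‖² (1 + t‖x‖)^(α-2)`, so `⟪∇g x - ∇g 0, x⟫ ≥ μ/(α-1) (‖x‖^α - ‖x‖)`.
Cauchy–Schwarz costs the terms `⟪∇g 0, x⟫` and `⟪∇f x - ∇g x, x⟫` only a multiple of `‖x‖`, and the
sharp Young inequality trades this linear term for half of `μ/(α-1) ‖x‖^α` plus the constant `b`.
-/

open Set Real
open scoped RealInnerProductSpace

theorem mul_rpow_sub_one_mul_le_rpow_add {p r ρ : ℝ} (hp : 1 ≤ p) (hr : 0 ≤ r) (hρ : 0 ≤ ρ) :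
    p * ρ ^ (p - 1) * r ≤ r ^ p + (p - 1) * ρ ^ p := by
  have hp0 : 0 < p := by linarith
  have hamgm := geom_mean_le_arith_mean2_weighted (p₁ := r ^ p) (p₂ := ρ ^ p)
    (inv_nonneg.2 hp0.le) (div_nonneg (sub_nonneg.2 hp) hp0.le) (by positivity) (by positivity)
    (by field_simp; ring)
  rw [rpow_rpow_inv hr hp0.ne', ← rpow_mul hρ, mul_div_cancel₀ _ hp0.ne'] at hamgm
  calc p * ρ ^ (p - 1) * r = p * (r * ρ ^ (p - 1)) := by ring
    _ ≤ p * (p⁻¹ * r ^ p + (p - 1) / p * ρ ^ p) := mul_le_mul_of_nonneg_left hamgm hp0.le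
    _ = r ^ p + (p - 1) * ρ ^ p := by field_simp

theorem rpow_eq_rpow_sub_one_mul {x y : ℝ} (hx : 0 ≤ x) (hy : y ≠ 0) : x ^ y = x ^ (y - 1) * x := by
  conv_lhs => rw [← sub_add_cancel y 1, rpow_add' hx (by simpa), rpow_one]

theorem mul_le_rpow_add_rpow {α c D r : ℝ} (hα : 1 < α) (hc : 0 < c) (hD : 0 ≤ D) (hr : 0 ≤ r) :
    α / (α - 1) * D * r ≤ c / (α - 1) * r ^ α + (D ^ α / c) ^ (1 / (α - 1)) := by
  have ht : 0 < α - 1 := by linarith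
  -- the tangent point of `r ↦ c / (α - 1) * r ^ α` with slope `α / (α - 1) * D`
  set ρ := (D / c) ^ (1 / (α - 1)) with hρ_def
  have hρt : ρ ^ (α - 1) = D / c := by
    rw [hρ_def, one_div, rpow_inv_rpow (by positivity) ht.ne']
  have hb : (D ^ α / c) ^ (1 / (α - 1)) = D * ρ := by
    rw [rpow_eq_rpow_sub_one_mul hD (by linarith), mul_div_assoc,
      mul_rpow (by positivity) (by positivity), one_div, rpow_rpow_inv hD ht.ne', ← one_div]
  have htangent := mul_rpow_sub_one_mul_le_rpow_add hα.le hr (by positivity : 0 ≤ ρ)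
  have hρα : ρ ^ α = D / c * ρ := by
    rw [rpow_eq_rpow_sub_one_mul (by positivity) (by linarith), hρt]
  rw [hρt, hρα] at htangent
  rw [hb]
  have hscaled := mul_le_mul_of_nonneg_left htangent (by positivity : 0 ≤ c / (α - 1))
  field_simp at hscaled ⊢
  linarith

section
variable {E : Type*} [NormedAddCommGroup E] [InnerProductSpace ℝ E] {G : E → E}

theorem sub_le_inner_map_sub_of_hasDerivAt (hG : Differentiable ℝ G) (x : E) {ψ ψ' : ℝ → ℝ}
    (hψ : ∀ t ∈ Icc (0 : ℝ) 1, HasDerivAt ψ (ψ' t) t)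
    (hψ' : ∀ t ∈ Ioo (0 : ℝ) 1, ψ' t ≤ ⟪fderiv ℝ G (t • x) x, x⟫) :
    ψ 1 - ψ 0 ≤ ⟪G x - G 0, x⟫ := by
  have hφ : ∀ t ∈ Icc (0 : ℝ) 1, HasDerivAt (fun t => ⟪G (t • x), x⟫ - ψ t)
      (⟪fderiv ℝ G (t • x) x, x⟫ - ψ' t) t := by
    intro t ht
    have hline : HasDerivAt (fun t : ℝ => t • x) x t := by
      simpa using (hasDerivAt_id t).smul_const x
    have hGline := (hG (t • x)).hasFDerivAt.comp_hasDerivAt t hline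
    have hinner : HasDerivAt (fun t => ⟪G (t • x), x⟫) ⟪fderiv ℝ G (t • x) x, x⟫ t := by
      simpa using hGline.inner ℝ (hasDerivAt_const t x)
    exact hinner.sub (hψ t ht)
  have hmono : MonotoneOn (fun t => ⟪G (t • x), x⟫ - ψ t) (Icc 0 1) := by
    refine monotoneOn_of_hasDerivWithinAt_nonneg (convex_Icc 0 1)
      (fun t ht => (hφ t ht).continuousAt.continuousWithinAt)
      (fun t ht => (hφ t (interior_subset ht)).hasDerivWithinAt) fun t ht => ?_
    rw [interior_Icc] at ht
    exact sub_nonneg.2 (hψ' t ht)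
  have hφ01 := hmono (left_mem_Icc.2 zero_le_one) (right_mem_Icc.2 zero_le_one) zero_le_one
  simp only [zero_smul, one_smul] at hφ01
  rw [inner_sub_left]
  linarith

theorem mul_rpow_sub_le_inner_map_sub {μ α : ℝ} (hα : α ≠ 1) (hG : Differentiable ℝ G)
    (hHess : ∀ x v, μ * (1 + ‖x‖) ^ (α - 2) * ‖v‖ ^ 2 ≤ ⟪fderiv ℝ G x v, v⟫) (x : E) :
    μ / (α - 1) * ‖x‖ * ((1 + ‖x‖) ^ (α - 1) - 1) ≤ ⟪G x - G 0, x⟫ := by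
  have hα1 : α - 1 ≠ 0 := sub_ne_zero.2 hα
  have hψ : ∀ t ∈ Icc (0 : ℝ) 1, HasDerivAt (fun t => μ / (α - 1) * ‖x‖ * (1 + t * ‖x‖) ^ (α - 1))
      (μ * (1 + t * ‖x‖) ^ (α - 2) * ‖x‖ ^ 2) t := by
    intro t ht
    have hpos : 0 < 1 + t * ‖x‖ := by have := ht.1; positivity
    have hlin : HasDerivAt (fun t : ℝ => 1 + t * ‖x‖) ‖x‖ t := by
      simpa using ((hasDerivAt_id t).mul_const ‖x‖).const_add 1
    refine ((hlin.rpow_const (p := α - 1) (Or.inl hpos.ne')).const_mul _).congr_deriv ?_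
    rw [show α - 1 - 1 = α - 2 by ring]
    field_simp
  have hray := sub_le_inner_map_sub_of_hasDerivAt hG x hψ fun t ht => by
    have h := hHess (t • x) x
    rwa [norm_smul, norm_of_nonneg ht.1.le] at h
  simp only [zero_mul, add_zero, one_mul, one_rpow] at hray
  linarith
end

theorem dissipativity_of_hessian_lower_bound_general {d : ℕ}
    (f' g' : EuclideanSpace ℝ (Fin d) → EuclideanSpace ℝ (Fin d))
    (μ α ε : ℝ) (hμ : 0 < μ) (hα1 : 1 < α) (hε : 0 ≤ ε)
    (hg'diff : Differentiable ℝ g')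
    (hHess : ∀ x v, μ * (1 + ‖x‖) ^ (α - 2) * ‖v‖ ^ 2 ≤ (inner ℝ (fderiv ℝ g' x v) v : ℝ))
    (hpert : ∀ x, ‖f' x - g' x‖ ≤ ε) :
    ∀ x, (μ / (2 * (α - 1))) * ‖x‖ ^ α
        - (2 * (‖g' 0‖ + μ + ε) ^ α / μ) ^ (1 / (α - 1))
      ≤ (inner ℝ (f' x) x : ℝ) := by
  intro x
  have ht : 0 < α - 1 := by linarith
  have hray := mul_rpow_sub_le_inner_map_sub hα1.ne' hg'diff hHess x
  have hfg : -(ε * ‖x‖) ≤ ⟪f' x - g' x, x⟫ :=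
    (neg_le_neg (mul_le_mul_of_nonneg_right (hpert x) (norm_nonneg x))).trans
      (abs_le.1 (abs_real_inner_le_norm _ _)).1
  have hg'0 : -(‖g' 0‖ * ‖x‖) ≤ ⟪g' 0, x⟫ := (abs_le.1 (abs_real_inner_le_norm _ _)).1
  have hpow : ‖x‖ ^ α ≤ ‖x‖ * (1 + ‖x‖) ^ (α - 1) := by
    rw [rpow_eq_rpow_sub_one_mul (norm_nonneg x) (by linarith), mul_comm]
    gcongr
    linarith
  have hyoung := mul_le_rpow_add_rpow hα1 (half_pos hμ) (D := ‖g' 0‖ + μ + ε) (by positivity)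
    (norm_nonneg x)
  rw [div_div_eq_mul_div, mul_comm _ (2 : ℝ)] at hyoung
  have hC : μ / (α - 1) + ‖g' 0‖ + ε ≤ α / (α - 1) * (‖g' 0‖ + μ + ε) := by
    rw [div_add' _ _ _ ht.ne', div_add' _ _ _ ht.ne', div_mul_eq_mul_div,
      div_le_div_iff_of_pos_right ht]
    nlinarith [norm_nonneg (g' 0)]
  have hsplit : ⟪f' x, x⟫ = ⟪f' x - g' x, x⟫ + ⟪g' x - g' 0, x⟫ + ⟪g' 0, x⟫ := by
    simp only [inner_sub_left]; ring
  rw [← div_div]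
  linear_combination -hsplit + hfg + hray + hg'0 + μ / (α - 1) * hpow + ‖x‖ * hC + hyoung

theorem dissipativity_of_hessian_lower_bound {d : ℕ}
    (f g : EuclideanSpace ℝ (Fin d) → ℝ)
    (f' g' : EuclideanSpace ℝ (Fin d) → EuclideanSpace ℝ (Fin d))
    (μ α ε : ℝ) (hμ : 0 < μ) (hα1 : 1 < α) (hα2 : α ≤ 2) (hε : 0 ≤ ε)
    (hgradf : ∀ x, HasGradientAt f (f' x) x)
    (hgradg : ∀ x, HasGradientAt g (g' x) x)
    (hg'diff : Differentiable ℝ g')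
    (hHess : ∀ x v, μ * (1 + ‖x‖) ^ (α - 2) * ‖v‖ ^ 2 ≤ (inner ℝ (fderiv ℝ g' x v) v : ℝ))
    (hpert : ∀ x, ‖f' x - g' x‖ ≤ ε) :
    ∀ x, (μ / (2 * (α - 1))) * ‖x‖ ^ α
        - (2 * (‖g' 0‖ + μ + ε) ^ α / μ) ^ (1 / (α - 1))
      ≤ (inner ℝ (f' x) x : ℝ) :=
  dissipativity_of_hessian_lower_bound_general f' g' μ α ε hμ hα1 hε hg'diff hHess hpert
end

section
/- Let ν* = e^{-f} be a probability density on ℝ^d where f satisfies ⟨∇f(x), x⟩ ≥ a‖x‖^α - b and ‖∇f(x)‖ ≤ M(1+‖x‖^ζ) with a, b, M > 0, α ∈ [1,2], ζ ≤ α/2. Then for any probability density ρ, E_{x~ρ}[‖x‖^α] ≤ (4α/a)·(KL(ρ‖ν*) + d̃·μ̃), where μ̃ = log(16π/a) + M((2a+2b)/a)² + b + |f(0)| and d̃ = d(1+(1-α/2)log d). -/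
/-!
Put `c = a / (4α)`. Integrating the dissipativity bound along rays gives
`f x ≥ f (x / 2) + (a / 2α) ‖x‖^α - b log 2`, hence `exp (c ‖x‖^α - f x) ≤ 2^b exp (-f (x / 2))`
and the tilted partition function `Z = ∫ exp (c ‖x‖^α - f)` is at most `2^(b + d)`.
The Gibbs variational principle `∫ ρ g ≤ KL(ρ ‖ e^{-f}) + log ∫ e^{g - f}` for `g = c ‖x‖^α`
bounds the moment by `(KL + (b + d) log 2) / c`. Finally, dissipativity and the gradient growth
bound at a unit vector give `a ≤ 2M + b`, which is what makes `(b + d) log 2 ≤ d̃ μ̃`.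
-/

open MeasureTheory Real

theorem mul_add_one_le_mul_log_add_exp {u : ℝ} (hu : 0 ≤ u) (v : ℝ) :
    u * (v + 1) ≤ u * log u + exp v := by
  rcases hu.eq_or_lt with rfl | hu
  · simp [(exp_pos v).le]
  · have key : u * (v - log u + 1) ≤ u * exp (v - log u) :=
      mul_le_mul_of_nonneg_left (by linarith [add_one_le_exp (v - log u)]) hu.le
    rw [exp_sub, exp_log hu, mul_div_cancel₀ _ hu.ne'] at key
    linarith

theorem integral_mul_le_integral_mul_log_add_log_integral_exp {Ω : Type*} [MeasurableSpace Ω]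
    {μ : Measure Ω} {ρ g V : Ω → ℝ} (hρ : ∀ x, 0 ≤ ρ x) (hρ1 : ∫ x, ρ x ∂μ = 1)
    (hg : ∀ x, 0 ≤ g x) (hg_meas : AEStronglyMeasurable g μ)
    (hKL : Integrable (fun x => ρ x * log (ρ x / exp (-V x))) μ)
    (hZ : Integrable (fun x => exp (g x - V x)) μ) :
    ∫ x, ρ x * g x ∂μ ≤
      ∫ x, ρ x * log (ρ x / exp (-V x)) ∂μ + log (∫ x, exp (g x - V x) ∂μ) := by
  have hρi : Integrable ρ μ := .of_integral_ne_zero (by simp [hρ1])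
  have : NeZero μ := ⟨by rintro rfl; simp at hρ1⟩
  set Z := ∫ x, exp (g x - V x) ∂μ
  have hZpos : 0 < Z := integral_exp_pos hZ
  -- Young's inequality for `u = ρ e^V` and `v = g - log Z`, multiplied by `e^{-V}`
  have hpoint : ∀ x, ρ x * g x ≤
      ρ x * log (ρ x / exp (-V x)) + (log Z - 1) * ρ x + exp (g x - V x) / Z := by
    intro x
    have h := mul_le_mul_of_nonneg_left
      (mul_add_one_le_mul_log_add_exp (div_nonneg (hρ x) (exp_pos (-V x)).le) (g x - log Z))
      (exp_pos (-V x)).le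
    have hu : exp (-V x) * (ρ x / exp (-V x)) = ρ x := mul_div_cancel₀ _ (exp_pos _).ne'
    have hZx : exp (-V x) * exp (g x - log Z) = exp (g x - V x) / Z := by
      rw [← exp_add, show -V x + (g x - log Z) = g x - V x - log Z by ring, exp_sub,
        exp_log hZpos]
    rw [mul_add (exp (-V x)), ← mul_assoc, ← mul_assoc, hu, hZx] at h
    linarith
  have hKLρ : Integrable (fun x => ρ x * log (ρ x / exp (-V x)) + (log Z - 1) * ρ x) μ :=
    hKL.add (hρi.const_mul _)
  have hRHS : Integrable (fun x => ρ x * log (ρ x / exp (-V x)) + (log Z - 1) * ρ x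
      + exp (g x - V x) / Z) μ := hKLρ.add (hZ.div_const _)
  have hLHS : Integrable (fun x => ρ x * g x) μ :=
    hRHS.mono' (hρi.1.mul hg_meas) (Filter.Eventually.of_forall fun x => by
      rw [norm_of_nonneg (mul_nonneg (hρ x) (hg x))]; exact hpoint x)
  have hint := integral_mono hLHS hRHS hpoint
  rw [integral_add hKLρ (hZ.div_const _), integral_add hKL (hρi.const_mul _), integral_const_mul,
    integral_div, hρ1, div_self hZpos.ne'] at hint
  linarith

section Dissipative

variable {E : Type*} [NormedAddCommGroup E] [InnerProductSpace ℝ E] {f : E → ℝ} {f' : E → E}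
  {a b α : ℝ}

theorem HasGradientAt.hasDerivAt_comp_smul [CompleteSpace E] {x y : E} {t : ℝ}
    (h : HasGradientAt f x (t • y)) : HasDerivAt (fun s : ℝ => f (s • y)) (inner ℝ x y) t := by
  have := h.hasFDerivAt.comp_hasDerivAt t ((hasDerivAt_id t).smul_const y)
  simp only [InnerProductSpace.toDual_apply_apply, one_smul] at this
  exact this

theorem le_apply_smul_of_dissipative [CompleteSpace E] (hgrad : ∀ x, HasGradientAt f (f' x) x)
    (hdis : ∀ x, a * ‖x‖ ^ α - b ≤ inner ℝ (f' x) x) (hα : α ≠ 0) (y : E) {l : ℝ} (hl : 1 ≤ l) :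
    f y + a / α * ‖y‖ ^ α * (l ^ α - 1) - b * log l ≤ f (l • y) := by
  set g : ℝ → ℝ := fun t => f (t • y) - a / α * ‖y‖ ^ α * t ^ α + b * log t
  have hg : ∀ t > 0, HasDerivAt g
      (inner ℝ (f' (t • y)) y - a / α * ‖y‖ ^ α * (α * t ^ (α - 1)) + b * t⁻¹) t := fun t ht =>
    (((hgrad _).hasDerivAt_comp_smul).sub
      ((hasDerivAt_rpow_const (Or.inl ht.ne')).const_mul _)).add
      ((hasDerivAt_log ht.ne').const_mul b)
  have hg_nonneg : ∀ t > 0,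
      0 ≤ inner ℝ (f' (t • y)) y - a / α * ‖y‖ ^ α * (α * t ^ (α - 1)) + b * t⁻¹ := by
    intro t ht
    have h := hdis (t • y)
    rw [norm_smul, norm_of_nonneg ht.le, mul_rpow ht.le (norm_nonneg y), real_inner_smul_right]
      at h
    have hpow : t ^ α = t * t ^ (α - 1) := by
      rw [rpow_sub ht, rpow_one, mul_div_cancel₀ _ ht.ne']
    have : inner ℝ (f' (t • y)) y - a / α * ‖y‖ ^ α * (α * t ^ (α - 1)) + b * t⁻¹
        = (t * inner ℝ (f' (t • y)) y - (a * (t ^ α * ‖y‖ ^ α) - b)) / t := by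
      rw [hpow]; field_simp; ring
    rw [this]
    exact div_nonneg (by linarith) ht.le
  have hmono : MonotoneOn g (Set.Ici 1) :=
    monotoneOn_of_hasDerivWithinAt_nonneg (convex_Ici 1)
      (fun t ht => (hg t (one_pos.trans_le ht)).continuousAt.continuousWithinAt)
      (fun t ht => (hg t (one_pos.trans (by simpa using ht))).hasDerivWithinAt)
      (fun t ht => hg_nonneg t (one_pos.trans (by simpa using ht)))
  have := hmono (Set.mem_Ici.2 le_rfl) hl hl
  simp only [g, one_smul, one_rpow, log_one] at this
  linarith

theorem exp_mul_norm_rpow_sub_le_of_dissipative [CompleteSpace E]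
    (hgrad : ∀ x, HasGradientAt f (f' x) x)
    (hdis : ∀ x, a * ‖x‖ ^ α - b ≤ inner ℝ (f' x) x) (ha : 0 ≤ a) (hα : 1 ≤ α) {c : ℝ}
    (hc : c ≤ a / (2 * α)) (x : E) :
    exp (c * ‖x‖ ^ α - f x) ≤ 2 ^ b * exp (-f ((2 : ℝ)⁻¹ • x)) := by
  have hα0 : 0 < α := one_pos.trans_le hα
  set p : ℝ := 2 ^ α
  have hp : 2 ≤ p := by simpa using rpow_le_rpow_of_exponent_le one_le_two hα
  have hhalf : ‖(2 : ℝ)⁻¹ • x‖ ^ α = ‖x‖ ^ α / p := by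
    rw [norm_smul, norm_inv, RCLike.norm_ofNat, mul_rpow (by norm_num) (norm_nonneg x),
      inv_rpow zero_le_two, inv_mul_eq_div]
  have hgrowth := le_apply_smul_of_dissipative hgrad hdis hα0.ne' ((2 : ℝ)⁻¹ • x) one_le_two
  rw [smul_inv_smul₀ two_ne_zero, hhalf] at hgrowth
  have hgain : c * ‖x‖ ^ α ≤ a / α * (‖x‖ ^ α / p) * (p - 1) :=
    calc c * ‖x‖ ^ α ≤ a / (2 * α) * ‖x‖ ^ α := mul_le_mul_of_nonneg_right hc (by positivity)
      _ = a / α * ‖x‖ ^ α * (1 / 2) := by ring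
      _ ≤ a / α * ‖x‖ ^ α * ((p - 1) / p) := by
          refine mul_le_mul_of_nonneg_left ?_ (by positivity)
          rw [div_le_div_iff₀ two_pos (by positivity)]
          linarith
      _ = a / α * (‖x‖ ^ α / p) * (p - 1) := by ring
  rw [rpow_def_of_pos two_pos, ← exp_add]
  exact exp_le_exp.2 (by linarith)

theorem le_two_mul_add_of_dissipative_of_growth [Nontrivial E] {M ζ : ℝ}
    (hdis : ∀ x, a * ‖x‖ ^ α - b ≤ inner ℝ (f' x) x) (hgrow : ∀ x, ‖f' x‖ ≤ M * (1 + ‖x‖ ^ ζ)) :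
    a ≤ 2 * M + b := by
  obtain ⟨u, hu⟩ := exists_norm_eq E zero_le_one
  have hinner := real_inner_le_norm (f' u) u
  have hdis_u := hdis u
  have hgrow_u := hgrow u
  rw [hu, one_rpow] at hdis_u hgrow_u
  rw [hu, mul_one] at hinner
  linarith

end Dissipative

section Tilted

variable {E : Type*} [NormedAddCommGroup E] [InnerProductSpace ℝ E] [FiniteDimensional ℝ E]
  [MeasurableSpace E] [BorelSpace E] (μ : Measure E) [μ.IsAddHaarMeasure]
  {f : E → ℝ} {f' : E → E} {a b α c : ℝ}

theorem integrable_exp_mul_norm_rpow_sub_of_dissipative (hgrad : ∀ x, HasGradientAt f (f' x) x)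
    (hdis : ∀ x, a * ‖x‖ ^ α - b ≤ inner ℝ (f' x) x) (ha : 0 ≤ a) (hα : 1 ≤ α)
    (hc : c ≤ a / (2 * α)) (hf : Integrable (fun x => exp (-f x)) μ) :
    Integrable (fun x => exp (c * ‖x‖ ^ α - f x)) μ := by
  have hfc : Continuous f := continuous_iff_continuousAt.2 fun x => (hgrad x).continuousAt
  refine ((hf.comp_smul (inv_ne_zero two_ne_zero)).const_mul (2 ^ b)).mono' ?_ ?_
  · exact ((continuous_const.mul (continuous_norm.rpow_const fun _ => Or.inr
      (zero_le_one.trans hα))).sub hfc).rexp.aestronglyMeasurable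
  · refine Filter.Eventually.of_forall fun x => ?_
    rw [norm_of_nonneg (exp_pos _).le]
    exact exp_mul_norm_rpow_sub_le_of_dissipative hgrad hdis ha hα hc x

theorem log_integral_exp_mul_norm_rpow_sub_le (hgrad : ∀ x, HasGradientAt f (f' x) x)
    (hdis : ∀ x, a * ‖x‖ ^ α - b ≤ inner ℝ (f' x) x) (ha : 0 ≤ a) (hα : 1 ≤ α)
    (hc : c ≤ a / (2 * α)) (hf : ∫ x, exp (-f x) ∂μ = 1) :
    log (∫ x, exp (c * ‖x‖ ^ α - f x) ∂μ) ≤ (b + Module.finrank ℝ E) * log 2 := by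
  have hfi : Integrable (fun x => exp (-f x)) μ := .of_integral_ne_zero (by simp [hf])
  have hZ := integrable_exp_mul_norm_rpow_sub_of_dissipative μ hgrad hdis ha hα hc hfi
  have hle : ∫ x, exp (c * ‖x‖ ^ α - f x) ∂μ ≤ 2 ^ b * 2 ^ Module.finrank ℝ E :=
    calc ∫ x, exp (c * ‖x‖ ^ α - f x) ∂μ ≤ ∫ x, 2 ^ b * exp (-f ((2 : ℝ)⁻¹ • x)) ∂μ :=
          integral_mono hZ ((hfi.comp_smul (inv_ne_zero two_ne_zero)).const_mul _)
            (exp_mul_norm_rpow_sub_le_of_dissipative hgrad hdis ha hα hc)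
      _ = 2 ^ b * 2 ^ Module.finrank ℝ E := by
          rw [integral_const_mul,
            μ.integral_comp_inv_smul_of_nonneg (fun x => exp (-f x)) zero_le_two, hf, smul_eq_mul,
            mul_one]
  have hpos : 0 < ∫ x, exp (c * ‖x‖ ^ α - f x) ∂μ := integral_exp_pos hZ
  calc log (∫ x, exp (c * ‖x‖ ^ α - f x) ∂μ) ≤ log (2 ^ b * 2 ^ Module.finrank ℝ E) :=
        log_le_log hpos hle
    _ = (b + Module.finrank ℝ E) * log 2 := by
        rw [log_mul (by positivity) (by positivity), log_rpow two_pos, log_pow]; ring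

end Tilted

theorem one_add_mul_log_two_le {a b M : ℝ} (ha : 0 < a) (hb : 0 ≤ b) (hM : 0 ≤ M)
    (haM : a ≤ 2 * M + b) (t : ℝ) :
    (1 + b) * log 2 ≤ log (16 * π / a) + M * ((2 * a + 2 * b) / a) ^ 2 + b + |t| := by
  have hlog : 1 - a / (16 * π) ≤ log (16 * π / a) := by
    simpa using one_sub_inv_le_log_of_pos (show 0 < 16 * π / a by positivity)
  have ha16 : a / (16 * π) ≤ (2 * M + b) / 48 := by
    rw [div_le_div_iff₀ (by positivity) (by norm_num)]
    nlinarith [pi_gt_three]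
  have hQ : 2 ≤ (2 * a + 2 * b) / a := by
    rw [le_div_iff₀ ha]; linarith
  have hMQ : M * 4 ≤ M * ((2 * a + 2 * b) / a) ^ 2 :=
    mul_le_mul_of_nonneg_left (by nlinarith) hM
  nlinarith [log_two_lt_d9, abs_nonneg t, log_pos one_lt_two]

theorem add_mul_log_two_le_mul {d b α μ : ℝ} (hd : 1 ≤ d) (hα : α ≤ 2) (hb : 0 ≤ b)
    (hμ : (1 + b) * log 2 ≤ μ) :
    (b + d) * log 2 ≤ d * (1 + (1 - α / 2) * log d) * μ := by
  have hμ0 : 0 ≤ μ := le_trans (by positivity) hμ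
  have hweight : 1 ≤ 1 + (1 - α / 2) * log d :=
    le_add_of_nonneg_right (mul_nonneg (by linarith) (log_nonneg hd))
  calc (b + d) * log 2 ≤ d * ((1 + b) * log 2) := by
        nlinarith [mul_nonneg (mul_nonneg (sub_nonneg.2 hd) hb) (log_pos one_lt_two).le]
    _ ≤ d * μ := mul_le_mul_of_nonneg_left hμ (by linarith)
    _ ≤ d * (1 + (1 - α / 2) * log d) * μ := by
        apply mul_le_mul_of_nonneg_right _ hμ0
        nlinarith

theorem moment_kl_bound_general {d : ℕ} (hd : 1 ≤ d)
    (f : EuclideanSpace ℝ (Fin d) → ℝ)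
    (f' : EuclideanSpace ℝ (Fin d) → EuclideanSpace ℝ (Fin d))
    (ρ : EuclideanSpace ℝ (Fin d) → ℝ)
    (a b M α ζ : ℝ) (ha : 0 < a) (hb : 0 < b) (hM : 0 < M)
    (hα1 : 1 ≤ α) (hα2 : α ≤ 2)
    (hgrad : ∀ x, HasGradientAt f (f' x) x)
    (hdis : ∀ x, a * ‖x‖ ^ α - b ≤ (inner ℝ (f' x) x : ℝ))
    (hgrow : ∀ x, ‖f' x‖ ≤ M * (1 + ‖x‖ ^ ζ))
    (hnorm : ∫ x, Real.exp (-f x) = 1)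
    (hρ : ∀ x, 0 ≤ ρ x) (hρ1 : ∫ x, ρ x = 1)
    (hKL : Integrable (fun x => ρ x * Real.log (ρ x / Real.exp (-f x)))) :
    ∫ x, ρ x * ‖x‖ ^ α
      ≤ (4 * α / a) * ((∫ x, ρ x * Real.log (ρ x / Real.exp (-f x)))
          + (d * (1 + (1 - α / 2) * Real.log d)) *
            (Real.log (16 * Real.pi / a) + M * ((2 * a + 2 * b) / a) ^ 2 + b + |f 0|)) := by
  have : Nonempty (Fin d) := ⟨⟨0, hd⟩⟩
  have hα0 : 0 < α := one_pos.trans_le hα1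
  set c := a / (4 * α)
  have hc : c ≤ a / (2 * α) := div_le_div_of_nonneg_left ha.le (by positivity) (by linarith)
  have hgibbs := integral_mul_le_integral_mul_log_add_log_integral_exp
    (g := fun x => c * ‖x‖ ^ α) hρ hρ1 (fun x => by positivity)
    (continuous_const.mul (continuous_norm.rpow_const fun _ => Or.inr hα0.le)).aestronglyMeasurable
    hKL (integrable_exp_mul_norm_rpow_sub_of_dissipative volume hgrad hdis ha.le hα1 hc
      (.of_integral_ne_zero (by simp [hnorm])))
  have hlogZ := log_integral_exp_mul_norm_rpow_sub_le volume hgrad hdis ha.le hα1 hc hnorm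
  rw [finrank_euclideanSpace_fin] at hlogZ
  have haM := le_two_mul_add_of_dissipative_of_growth hdis hgrow
  have hconst := add_mul_log_two_le_mul (Nat.one_le_cast.2 hd) hα2 hb.le
    (one_add_mul_log_two_le ha hb.le hM.le haM (f 0))
  simp_rw [mul_left_comm (ρ _) c] at hgibbs
  rw [integral_const_mul] at hgibbs
  calc ∫ x, ρ x * ‖x‖ ^ α = 4 * α / a * (c * ∫ x, ρ x * ‖x‖ ^ α) := by
        simp only [c]; field_simp
    _ ≤ _ := by gcongr; linarith

theorem moment_kl_bound {d : ℕ} (hd : 1 ≤ d)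
    (f : EuclideanSpace ℝ (Fin d) → ℝ)
    (f' : EuclideanSpace ℝ (Fin d) → EuclideanSpace ℝ (Fin d))
    (ρ : EuclideanSpace ℝ (Fin d) → ℝ)
    (a b M α ζ : ℝ) (ha : 0 < a) (hb : 0 < b) (hM : 0 < M)
    (hα1 : 1 ≤ α) (hα2 : α ≤ 2) (hζ : ζ ≤ α / 2)
    (hgrad : ∀ x, HasGradientAt f (f' x) x)
    (hdis : ∀ x, a * ‖x‖ ^ α - b ≤ (inner ℝ (f' x) x : ℝ))
    (hgrow : ∀ x, ‖f' x‖ ≤ M * (1 + ‖x‖ ^ ζ))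
    (hnorm : ∫ x, Real.exp (-f x) = 1)
    (hρ : ∀ x, 0 ≤ ρ x) (hρ1 : ∫ x, ρ x = 1)
    (hKL : Integrable (fun x => ρ x * Real.log (ρ x / Real.exp (-f x)))) :
    ∫ x, ρ x * ‖x‖ ^ α
      ≤ (4 * α / a) * ((∫ x, ρ x * Real.log (ρ x / Real.exp (-f x)))
          + (d * (1 + (1 - α / 2) * Real.log d)) *
            (Real.log (16 * Real.pi / a) + M * ((2 * a + 2 * b) / a) ^ 2 + b + |f 0|)) :=
  moment_kl_bound_general hd f f' ρ a b M α ζ ha hb hM hα1 hα2 hgrad hdis hgrow hnorm hρ hρ1 hKL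
end
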